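/- Let ε > 0, b ∈ [0, 2(e^ε − 1)], and let R₁, Rᵢ be integrable random variables with values in [0,1] almost surely, means μ₁, μᵢ and equal variances σ₁² = σᵢ². Then under the quadratic probability function the gap between privatized means equals E[p(R₁)] − E[p(Rᵢ)] = (((e^ε − 1 − b)(μ₁ + μᵢ) + b)/(e^ε + 1)) · (μ₁ − μᵢ). -/

import Mathlib

/-! Since `p` is quadratic, `E[p(R)]` depends only on `E[R]` and `E[R²] = Var R + E[R]²`. With equal
variances the difference of second moments is `μ₁² - μᵢ² = (μ₁ + μᵢ)(μ₁ - μᵢ)`, and the common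
factor `μ₁ - μᵢ` comes out. -/

open Real Set MeasureTheory

section Moments

variable {Ω : Type*} [MeasurableSpace Ω] {P : Measure Ω} [IsProbabilityMeasure P] {R : Ω → ℝ}

theorem integral_quadratic_comp (hR : Integrable R P) (hR2 : Integrable (fun ω => R ω ^ 2) P)
    (a b c : ℝ) :
    ∫ ω, (a * R ω ^ 2 + b * R ω + c) ∂P = a * ∫ ω, R ω ^ 2 ∂P + b * ∫ ω, R ω ∂P + c := by
  have hlin : Integrable (fun ω => a * R ω ^ 2 + b * R ω) P :=
    (hR2.const_mul a).add (hR.const_mul b)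
  rw [integral_add hlin (integrable_const c),
    integral_add (hR2.const_mul a) (hR.const_mul b), integral_const_mul, integral_const_mul,
    integral_const, probReal_univ, one_smul]

theorem integral_sq_eq_integral_sub_integral_sq_add (hR : Integrable R P)
    (hR2 : Integrable (fun ω => R ω ^ 2) P) :
    ∫ ω, R ω ^ 2 ∂P = ∫ ω, (R ω - ∫ ω', R ω' ∂P) ^ 2 ∂P + (∫ ω, R ω ∂P) ^ 2 := by
  set m := ∫ ω, R ω ∂P
  have expand : ∫ ω, (R ω - m) ^ 2 ∂P = ∫ ω, (1 * R ω ^ 2 + (-2 * m) * R ω + m ^ 2) ∂P := by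
    congr 1 with ω
    ring
  rw [expand, integral_quadratic_comp hR hR2]
  ring

end Moments

theorem quadratic_privatized_mean_gap_equal_var_general {Ω : Type*} [MeasurableSpace Ω]
    (P : Measure Ω) [IsProbabilityMeasure P]
    (ε b : ℝ)
    (R₁ Rᵢ : Ω → ℝ) (μ₁ μᵢ σsq : ℝ)
    (hint₁ : Integrable R₁ P) (hintᵢ : Integrable Rᵢ P)
    (hint₁2 : Integrable (fun ω => (R₁ ω) ^ 2) P)
    (hintᵢ2 : Integrable (fun ω => (Rᵢ ω) ^ 2) P)
    (hmean₁ : ∫ ω, R₁ ω ∂P = μ₁) (hmeanᵢ : ∫ ω, Rᵢ ω ∂P = μᵢ)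
    (hvar₁ : ∫ ω, (R₁ ω - μ₁) ^ 2 ∂P = σsq)
    (hvarᵢ : ∫ ω, (Rᵢ ω - μᵢ) ^ 2 ∂P = σsq) :
    (∫ ω, ((exp ε - 1 - b) * (R₁ ω) ^ 2 + b * R₁ ω + 1) / (exp ε + 1) ∂P)
      - (∫ ω, ((exp ε - 1 - b) * (Rᵢ ω) ^ 2 + b * Rᵢ ω + 1) / (exp ε + 1) ∂P)
      = (((exp ε - 1 - b) * (μ₁ + μᵢ) + b) / (exp ε + 1)) * (μ₁ - μᵢ) := by
  have second_moment₁ : ∫ ω, R₁ ω ^ 2 ∂P = σsq + μ₁ ^ 2 := by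
    rw [integral_sq_eq_integral_sub_integral_sq_add hint₁ hint₁2, hmean₁, hvar₁]
  have second_momentᵢ : ∫ ω, Rᵢ ω ^ 2 ∂P = σsq + μᵢ ^ 2 := by
    rw [integral_sq_eq_integral_sub_integral_sq_add hintᵢ hintᵢ2, hmeanᵢ, hvarᵢ]
  rw [integral_div, integral_div, integral_quadratic_comp hint₁ hint₁2,
    integral_quadratic_comp hintᵢ hintᵢ2, second_moment₁, second_momentᵢ, hmean₁, hmeanᵢ]
  ring

/-- Under the quadratic probability function, for two arms with means `μ₁, μᵢ` and
equal variances, the gap between privatized means equals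
`(((e^ε-1-b)(μ₁+μᵢ)+b)/(e^ε+1))(μ₁-μᵢ)`. -/
theorem quadratic_privatized_mean_gap_equal_var {Ω : Type*} [MeasurableSpace Ω]
    (P : Measure Ω) [IsProbabilityMeasure P]
    (ε b : ℝ) (hε : 0 < ε) (hb : b ∈ Icc (0:ℝ) (2 * (exp ε - 1)))
    (R₁ Rᵢ : Ω → ℝ) (μ₁ μᵢ σsq : ℝ)
    (hint₁ : Integrable R₁ P) (hintᵢ : Integrable Rᵢ P)
    (hint₁2 : Integrable (fun ω => (R₁ ω) ^ 2) P)
    (hintᵢ2 : Integrable (fun ω => (Rᵢ ω) ^ 2) P)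
    (hbd₁ : ∀ᵐ ω ∂P, R₁ ω ∈ Icc (0:ℝ) 1)
    (hbdᵢ : ∀ᵐ ω ∂P, Rᵢ ω ∈ Icc (0:ℝ) 1)
    (hmean₁ : ∫ ω, R₁ ω ∂P = μ₁) (hmeanᵢ : ∫ ω, Rᵢ ω ∂P = μᵢ)
    (hvar₁ : ∫ ω, (R₁ ω - μ₁) ^ 2 ∂P = σsq)
    (hvarᵢ : ∫ ω, (Rᵢ ω - μᵢ) ^ 2 ∂P = σsq) :
    (∫ ω, ((exp ε - 1 - b) * (R₁ ω) ^ 2 + b * R₁ ω + 1) / (exp ε + 1) ∂P)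
      - (∫ ω, ((exp ε - 1 - b) * (Rᵢ ω) ^ 2 + b * Rᵢ ω + 1) / (exp ε + 1) ∂P)
      = (((exp ε - 1 - b) * (μ₁ + μᵢ) + b) / (exp ε + 1)) * (μ₁ - μᵢ) :=
  quadratic_privatized_mean_gap_equal_var_general P ε b R₁ Rᵢ μ₁ μᵢ σsq hint₁ hintᵢ hint₁2 hintᵢ2
    hmean₁ hmeanᵢ hvar₁ hvarᵢ
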